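/- Let r ≥ 2 and let G be a K_{2,r+1}-free graph with m edges, no isolated vertices, and m ≥ 16r². Then the spectral radius of G satisfies λ(G) ≤ √m, and equality holds if and only if G is a star K_{1,m}. -/

import Mathlib

open SimpleGraph Finset

/-- `F` is contained in `G` as a (not necessarily induced) subgraph. -/
def Contains {α β : Type*} (F : SimpleGraph α) (G : SimpleGraph β) : Prop :=
  ∃ f : α ↪ β, ∀ ⦃a b⦄, F.Adj a b → G.Adj (f a) (f b)

/-- The theta graph θ_{2,2,3}: vertices 0 = a, 1 = b, 2 = c₁, 3 = c₂, 4 = d₁, 5 = d₂,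
with edges ac₁, c₁b, ac₂, c₂b, ad₁, d₁d₂, d₂b. -/
def theta223 : SimpleGraph (Fin 6) :=
  SimpleGraph.fromRel (fun x y =>
    (x = 0 ∧ y = 2) ∨ (x = 2 ∧ y = 1) ∨ (x = 0 ∧ y = 3) ∨ (x = 3 ∧ y = 1) ∨
    (x = 0 ∧ y = 4) ∨ (x = 4 ∧ y = 5) ∨ (x = 5 ∧ y = 1))

open Classical in
/-- The real adjacency matrix of a simple graph. -/
noncomputable def adjMat {V : Type*} (G : SimpleGraph V) : Matrix V V ℝ :=
  Matrix.of fun a b => if G.Adj a b then 1 else 0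

/-- `lam` is the largest eigenvalue (spectral radius) of the adjacency matrix of `G`. -/
def IsSpectralRadius {V : Type*} [Fintype V] (G : SimpleGraph V) (lam : ℝ) : Prop :=
  (∃ v : V → ℝ, v ≠ 0 ∧ (adjMat G).mulVec v = lam • v) ∧
  ∀ (μ : ℝ) (v : V → ℝ), v ≠ 0 → (adjMat G).mulVec v = μ • v → μ ≤ lam

/-- The join K₂ ∨ kK₁ : two adjacent dominating vertices joined to k pairwise
nonadjacent vertices. -/
def K2JoinEmpty (k : ℕ) : SimpleGraph (Fin 2 ⊕ Fin k) :=
  SimpleGraph.fromRel (fun x _ => x.isLeft)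

/-- The star K_{1,r} with center 0 and r leaves. -/
def starGraph (r : ℕ) : SimpleGraph (Fin (r + 1)) :=
  SimpleGraph.fromRel (fun x _ => x = 0)

/-- The double star S_{1,2}: central edge 01, leaf 2 adjacent to 0, leaves 3, 4 adjacent to 1. -/
def doubleStarS12 : SimpleGraph (Fin 5) :=
  SimpleGraph.fromRel (fun x y =>
    (x = 0 ∧ y = 1) ∨ (x = 0 ∧ y = 2) ∨ (x = 1 ∧ y = 3) ∨ (x = 1 ∧ y = 4))

/-- K_{1,3}+e: the star with center 0 and leaves 1, 2, 3, plus the edge 12. -/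
def K13e : SimpleGraph (Fin 4) :=
  SimpleGraph.fromRel (fun x y => x = 0 ∨ (x = 1 ∧ y = 2))

/-- K₄ − e: the complete graph on four vertices minus the edge 23. -/
def K4e : SimpleGraph (Fin 4) :=
  SimpleGraph.fromRel (fun x y => ¬(x = 2 ∧ y = 3) ∧ ¬(x = 3 ∧ y = 2))

open Finset in
lemma mulVec_adjMat {V : Type*} [Fintype V] (G : SimpleGraph V) [DecidableRel G.Adj]
    (x : V → ℝ) (u : V) :
    (adjMat G).mulVec x u = ∑ v ∈ G.neighborFinset u, x v := by
  classical
  have h1 : (adjMat G).mulVec x u = ∑ v, (if G.Adj u v then x v else 0) := by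
    simp only [adjMat, Matrix.mulVec, dotProduct, Matrix.of_apply]
    refine Finset.sum_congr rfl fun v _ => ?_
    split_ifs <;> simp
  rw [h1]
  rw [← Finset.sum_subset (Finset.subset_univ (G.neighborFinset u))
      (fun v _ hv => by rw [if_neg (by rwa [← SimpleGraph.mem_neighborFinset G u v])])]
  exact Finset.sum_congr rfl fun v hv => if_pos ((SimpleGraph.mem_neighborFinset _ _ _).1 hv)

open Finset in
lemma codeg_le {V : Type*} [Fintype V] [DecidableEq V] {G : SimpleGraph V} [DecidableRel G.Adj]
    {r : ℕ}
    (hfree : ¬ Contains (completeBipartiteGraph (Fin 2) (Fin (r + 1))) G)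
    {u w : V} (huw : u ≠ w) :
    ((G.neighborFinset u) ∩ (G.neighborFinset w)).card ≤ r := by
  by_contra hcard
  push_neg at hcard
  obtain ⟨t, hts, htc⟩ := Finset.exists_subset_card_eq hcard
  let e : t ≃ Fin (r + 1) := Finset.equivFinOfCardEq htc
  set c : Fin (r + 1) → V := fun j => ((e.symm j : t) : V) with hc
  have hcmem : ∀ j, c j ∈ G.neighborFinset u ∩ G.neighborFinset w := fun j =>
    hts (e.symm j).2
  have hcu : ∀ j, G.Adj u (c j) := fun j =>
    (SimpleGraph.mem_neighborFinset _ _ _).1 (Finset.mem_inter.1 (hcmem j)).1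
  have hcw : ∀ j, G.Adj w (c j) := fun j =>
    (SimpleGraph.mem_neighborFinset _ _ _).1 (Finset.mem_inter.1 (hcmem j)).2
  have hcinj : Function.Injective c := fun j k h => by
    have := Subtype.ext h
    simpa using e.symm.injective this
  set f : Fin 2 ⊕ Fin (r + 1) → V := fun s => Sum.elim (fun i => if i = 0 then u else w) c s
    with hf
  have hfinj : Function.Injective f := by
    rintro (i | j) (i' | j') h
    · simp only [hf, Sum.elim_inl] at h
      congr 1
      fin_cases i <;> fin_cases i' <;> simp_all
    · simp only [hf, Sum.elim_inl, Sum.elim_inr] at h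
      exfalso
      fin_cases i <;> simp at h
      · exact (hcu j').ne h
      · exact (hcw j').ne h
    · simp only [hf, Sum.elim_inl, Sum.elim_inr] at h
      exfalso
      fin_cases i' <;> simp at h
      · exact (hcu j).ne h.symm
      · exact (hcw j).ne h.symm
    · simp only [hf, Sum.elim_inr] at h
      exact congrArg Sum.inr (hcinj h)
  refine hfree ⟨⟨f, hfinj⟩, ?_⟩
  rintro (i | j) (i' | j') hadj <;>
    simp only [completeBipartiteGraph_adj, Sum.isLeft, Sum.isRight] at hadj <;>
    simp_all only [Function.Embedding.coeFn_mk, hf, Sum.elim_inl, Sum.elim_inr]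
  · exact False.elim (by simpa using hadj)
  · fin_cases i <;> simp only [if_pos, if_neg] <;> [exact hcu j'; exact hcw j']
  · fin_cases i' <;> [exact (hcu j).symm; exact (hcw j).symm]
  · exact False.elim (by simpa using hadj)

lemma core {V : Type*} [Fintype V] [DecidableEq V] (G : SimpleGraph V) [DecidableRel G.Adj]
    {r m : ℕ} (hr : 2 ≤ r) (hm : G.edgeFinset.card = m) (hm' : 16 * r ^ 2 ≤ m)
    (hcod : ∀ v w : V, v ≠ w → ((G.neighborFinset v) ∩ (G.neighborFinset w)).card ≤ r)
    (μ : ℝ) (hμ0 : 0 ≤ μ) (y : V → ℝ) (hy0 : ∀ u, 0 ≤ y u) (z : V) (hyz : y z = 1)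
    (hy1 : ∀ u, y u ≤ 1) (hsub : ∀ u, μ * y u ≤ ∑ v ∈ G.neighborFinset u, y v) :
    μ ≤ Real.sqrt m ∧ (μ = Real.sqrt m → G.degree z = m) := by
  set a : ℕ := G.degree z with ha
  set P : ℕ := ∑ w ∈ univ.erase z, ((G.neighborFinset w).erase z).card with hP
  -- mem facts
  have hmemN : ∀ u v : V, v ∈ G.neighborFinset u ↔ G.Adj u v := fun u v => G.mem_neighborFinset u v
  have hNz_sub : G.neighborFinset z ⊆ univ.erase z := by
    intro v hv
    exact mem_erase.2 ⟨((hmemN z v).1 hv).ne', mem_univ v⟩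
  -- handshake : 2m = 2a + P
  have h2m : 2 * m = 2 * a + P := by
    have hhs : ∑ w : V, G.degree w = 2 * m := by
      rw [SimpleGraph.sum_degrees_eq_twice_card_edges, hm]
    have h1 : ∑ w : V, G.degree w = a + ∑ w ∈ univ.erase z, G.degree w :=
      (Finset.add_sum_erase _ _ (mem_univ z)).symm
    have h2 : ∑ w ∈ univ.erase z, G.degree w
        = ∑ w ∈ univ.erase z, (((G.neighborFinset w).erase z).card + if z ∈ G.neighborFinset w then 1 else 0) := by
      refine Finset.sum_congr rfl fun w _ => ?_
      by_cases hzw : z ∈ G.neighborFinset w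
      · rw [if_pos hzw, ← SimpleGraph.card_neighborFinset_eq_degree, ← Finset.card_erase_add_one hzw]
      · rw [if_neg hzw, ← SimpleGraph.card_neighborFinset_eq_degree, Finset.erase_eq_of_notMem hzw, add_zero]
    have h3 : ∑ w ∈ univ.erase z, (if z ∈ G.neighborFinset w then 1 else 0) = a := by
      rw [Finset.sum_boole, Nat.cast_id]
      congr 1
      ext w
      simp only [mem_filter, mem_erase, mem_univ, true_and, and_true, hmemN]
      constructor
      · rintro ⟨_, h⟩; exact h.symm
      · intro h; exact ⟨h.ne', h.symm⟩
    rw [hhs.symm, h1, h2, Finset.sum_add_distrib, h3]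
    ring
  have ham : a ≤ m := by omega
  -- cast facts
  have hPc : (P : ℝ) = 2 * (m : ℝ) - 2 * (a : ℝ) := by
    have := congrArg (Nat.cast : ℕ → ℝ) h2m
    push_cast at this
    linarith
  -- swap lemma
  have hswap : ∀ g : V → ℝ, ∑ u ∈ G.neighborFinset z, ∑ v ∈ (G.neighborFinset u).erase z, g v
      = ∑ v ∈ univ.erase z, (((G.neighborFinset v ∩ G.neighborFinset z).card : ℝ)) * g v := by
    intro g
    have h1 : ∀ u : V, (G.neighborFinset u).erase z = (univ.erase z).filter (fun v => v ∈ G.neighborFinset u) := by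
      intro u
      ext v
      simp only [mem_erase, mem_filter, mem_univ, true_and]
      tauto
    calc ∑ u ∈ G.neighborFinset z, ∑ v ∈ (G.neighborFinset u).erase z, g v
        = ∑ u ∈ G.neighborFinset z, ∑ v ∈ univ.erase z, if v ∈ G.neighborFinset u then g v else 0 := by
          refine Finset.sum_congr rfl fun u _ => ?_
          rw [h1 u, Finset.sum_filter]
      _ = ∑ v ∈ univ.erase z, ∑ u ∈ G.neighborFinset z, if v ∈ G.neighborFinset u then g v else 0 := Finset.sum_comm
      _ = ∑ v ∈ univ.erase z, (((G.neighborFinset v ∩ G.neighborFinset z).card : ℝ)) * g v := by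
          refine Finset.sum_congr rfl fun v _ => ?_
          have hfe : (G.neighborFinset z).filter (fun u => v ∈ G.neighborFinset u)
              = G.neighborFinset v ∩ G.neighborFinset z := by
            ext u
            simp only [mem_filter, mem_inter, hmemN]
            constructor
            · rintro ⟨h1', h2'⟩; exact ⟨h2'.symm, h1'⟩
            · rintro ⟨h1', h2'⟩; exact ⟨h2', h1'.symm⟩
          rw [← Finset.sum_filter, hfe, Finset.sum_const, nsmul_eq_mul]
  -- step 1 : μ² ≤ a + D with D = ∑_{v≠z} c v y v
  set D : ℝ := ∑ v ∈ univ.erase z, (((G.neighborFinset v ∩ G.neighborFinset z).card : ℝ)) * y v with hD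
  have hzmem : ∀ u, u ∈ G.neighborFinset z → z ∈ G.neighborFinset u := by
    intro u hu
    exact (hmemN u z).2 (((hmemN z u).1 hu).symm)
  have hstep1 : μ * μ ≤ (a : ℝ) + D := by
    have h0 : μ * μ ≤ ∑ u ∈ G.neighborFinset z, μ * y u := by
      calc μ * μ = μ * (μ * y z) := by rw [hyz]; ring
        _ ≤ μ * ∑ u ∈ G.neighborFinset z, y u := mul_le_mul_of_nonneg_left (hsub z) hμ0
        _ = ∑ u ∈ G.neighborFinset z, μ * y u := Finset.mul_sum _ _ _
    refine h0.trans ?_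
    have h1 : ∀ u ∈ G.neighborFinset z, μ * y u ≤ 1 + ∑ v ∈ (G.neighborFinset u).erase z, y v := by
      intro u hu
      calc μ * y u ≤ ∑ v ∈ G.neighborFinset u, y v := hsub u
        _ = y z + ∑ v ∈ (G.neighborFinset u).erase z, y v := (Finset.add_sum_erase _ _ (hzmem u hu)).symm
        _ = 1 + ∑ v ∈ (G.neighborFinset u).erase z, y v := by rw [hyz]
    calc ∑ u ∈ G.neighborFinset z, μ * y u ≤ ∑ u ∈ G.neighborFinset z, (1 + ∑ v ∈ (G.neighborFinset u).erase z, y v) :=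
          Finset.sum_le_sum h1
      _ = (G.neighborFinset z).card + ∑ u ∈ G.neighborFinset z, ∑ v ∈ (G.neighborFinset u).erase z, y v := by
          rw [Finset.sum_add_distrib, Finset.sum_const, nsmul_eq_mul, mul_one]
      _ = (a : ℝ) + D := by
          rw [hswap y, SimpleGraph.card_neighborFinset_eq_degree]
  -- step 2 : μ * D ≤ (1 + r) * P
  have hstep2 : μ * D ≤ ((P : ℝ)) + (r : ℝ) * (P : ℝ) := by
    have hDsum : μ * D = ∑ v ∈ univ.erase z, (((G.neighborFinset v ∩ G.neighborFinset z).card : ℝ)) * (μ * y v) := by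
      rw [hD, Finset.mul_sum]
      exact Finset.sum_congr rfl fun v _ => by ring
    have hbound : ∀ v ∈ univ.erase z, (((G.neighborFinset v ∩ G.neighborFinset z).card : ℝ)) * (μ * y v)
        ≤ (((G.neighborFinset v ∩ G.neighborFinset z).card : ℝ)) * ((if v ∈ G.neighborFinset z then 1 else 0) + ∑ w ∈ (G.neighborFinset v).erase z, y w) := by
      intro v hv
      refine mul_le_mul_of_nonneg_left ?_ (by positivity)
      refine (hsub v).trans ?_
      by_cases hz : z ∈ G.neighborFinset v
      · rw [if_pos ((hmemN z v).2 (((hmemN v z).1 hz).symm)),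
          ← Finset.add_sum_erase _ _ hz, hyz]
      · rw [if_neg (fun hc => hz ((hmemN v z).2 (((hmemN z v).1 hc).symm))),
          Finset.erase_eq_of_notMem hz, zero_add]
    have hT : μ * D ≤ (∑ v ∈ univ.erase z, (((G.neighborFinset v ∩ G.neighborFinset z).card : ℝ)) * (if v ∈ G.neighborFinset z then 1 else 0))
        + ∑ v ∈ univ.erase z, (((G.neighborFinset v ∩ G.neighborFinset z).card : ℝ)) * ∑ w ∈ (G.neighborFinset v).erase z, y w := by
      rw [hDsum, ← Finset.sum_add_distrib]
      refine Finset.sum_le_sum fun v hv => ?_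
      rw [← mul_add]
      exact hbound v hv
    -- T1 ≤ P
    have hT1 : (∑ v ∈ univ.erase z, (((G.neighborFinset v ∩ G.neighborFinset z).card : ℝ)) * (if v ∈ G.neighborFinset z then 1 else 0))
        ≤ (P : ℝ) := by
      have e1 : ∑ v ∈ univ.erase z, (((G.neighborFinset v ∩ G.neighborFinset z).card : ℝ)) * (if v ∈ G.neighborFinset z then 1 else 0)
          = ∑ v ∈ (univ.erase z).filter (fun v => v ∈ G.neighborFinset z), (((G.neighborFinset v ∩ G.neighborFinset z).card : ℝ)) := by
        rw [Finset.sum_filter]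
        exact Finset.sum_congr rfl fun v _ => by split_ifs <;> simp
      have e2 : (univ.erase z).filter (fun v => v ∈ G.neighborFinset z) = G.neighborFinset z := by
        ext v
        simp only [mem_filter, mem_erase, mem_univ, true_and, and_true]
        exact ⟨fun h => h.2, fun h => ⟨((hmemN z v).1 h).ne', h⟩⟩
      rw [e1, e2]
      have hnat : ∑ v ∈ G.neighborFinset z, (G.neighborFinset v ∩ G.neighborFinset z).card ≤ P := by
        calc ∑ v ∈ G.neighborFinset z, (G.neighborFinset v ∩ G.neighborFinset z).card ≤ ∑ v ∈ G.neighborFinset z, ((G.neighborFinset v).erase z).card := by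
              refine Finset.sum_le_sum fun v hv => Finset.card_le_card ?_
              intro w hw
              rcases Finset.mem_inter.1 hw with ⟨hw1, hw2⟩
              exact Finset.mem_erase.2 ⟨((hmemN z w).1 hw2).ne', hw1⟩
          _ ≤ P := Finset.sum_le_sum_of_subset hNz_sub
      calc (∑ v ∈ G.neighborFinset z, (((G.neighborFinset v ∩ G.neighborFinset z).card : ℝ))) = ((∑ v ∈ G.neighborFinset z, (G.neighborFinset v ∩ G.neighborFinset z).card : ℕ) : ℝ) := by
            rw [Nat.cast_sum]
        _ ≤ (P : ℝ) := Nat.cast_le.2 hnat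
    -- T2 ≤ r * P
    have hT2 : (∑ v ∈ univ.erase z, (((G.neighborFinset v ∩ G.neighborFinset z).card : ℝ)) * ∑ w ∈ (G.neighborFinset v).erase z, y w)
        ≤ (r : ℝ) * (P : ℝ) := by
      have e3 : (r : ℝ) * (P : ℝ) = ∑ v ∈ univ.erase z, (r : ℝ) * (((G.neighborFinset v).erase z).card : ℝ) := by
        rw [← Finset.mul_sum, hP, Nat.cast_sum]
      rw [e3]
      refine Finset.sum_le_sum fun v hv => ?_
      have hvz : v ≠ z := (mem_erase.1 hv).1
      have hc : (((G.neighborFinset v ∩ G.neighborFinset z).card : ℝ)) ≤ (r : ℝ) := Nat.cast_le.2 (hcod v z hvz)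
      have hin : ∑ w ∈ (G.neighborFinset v).erase z, y w ≤ (((G.neighborFinset v).erase z).card : ℝ) := by
        calc ∑ w ∈ (G.neighborFinset v).erase z, y w ≤ ∑ w ∈ (G.neighborFinset v).erase z, 1 :=
              Finset.sum_le_sum fun w _ => hy1 w
          _ = (((G.neighborFinset v).erase z).card : ℝ) := by rw [Finset.sum_const, nsmul_eq_mul, mul_one]
      have hin0 : 0 ≤ ∑ w ∈ (G.neighborFinset v).erase z, y w := Finset.sum_nonneg fun w _ => hy0 w
      exact mul_le_mul hc hin hin0 (by positivity)
    linarith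
  -- final polynomial inequality
  have hfin : μ ^ 3 ≤ (a : ℝ) * μ + ((r : ℝ) + 1) * (P : ℝ) := by
    calc μ ^ 3 = μ * (μ * μ) := by ring
      _ ≤ μ * ((a : ℝ) + D) := mul_le_mul_of_nonneg_left hstep1 hμ0
      _ = (a : ℝ) * μ + μ * D := by ring
      _ ≤ (a : ℝ) * μ + ((P : ℝ) + (r : ℝ) * (P : ℝ)) := by linarith
      _ = (a : ℝ) * μ + ((r : ℝ) + 1) * (P : ℝ) := by ring
  have hrR : (2 : ℝ) ≤ (r : ℝ) := by exact_mod_cast hr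
  have hamR : (a : ℝ) ≤ (m : ℝ) := Nat.cast_le.2 ham
  have h4r : (4 : ℝ) * (r : ℝ) ≤ Real.sqrt m := by
    have h16 : ((4 : ℝ) * r) ^ 2 ≤ (m : ℝ) := by
      have : ((16 * r ^ 2 : ℕ) : ℝ) ≤ (m : ℝ) := Nat.cast_le.2 hm'
      push_cast at this
      nlinarith
    calc (4 : ℝ) * r = Real.sqrt (((4 : ℝ) * r) ^ 2) := (Real.sqrt_sq (by positivity)).symm
      _ ≤ Real.sqrt m := Real.sqrt_le_sqrt h16
  have hkey : μ ^ 3 ≤ (a : ℝ) * μ + (2 * (r : ℝ) + 2) * ((m : ℝ) - (a : ℝ)) := by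
    calc μ ^ 3 ≤ (a : ℝ) * μ + ((r : ℝ) + 1) * (P : ℝ) := hfin
      _ = (a : ℝ) * μ + (2 * (r : ℝ) + 2) * ((m : ℝ) - (a : ℝ)) := by rw [hPc]; ring
  have partA : μ ≤ Real.sqrt m := by
    by_cases hc : μ ≤ 4 * (r : ℝ)
    · exact hc.trans h4r
    · push_neg at hc
      have hμpos : 0 < μ := lt_of_le_of_lt (by positivity) hc
      have h1 : μ ^ 3 ≤ (m : ℝ) * μ := by nlinarith
      have h2 : μ ^ 2 ≤ (m : ℝ) := by nlinarith
      exact (Real.le_sqrt hμ0 (by positivity)).2 h2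
  refine ⟨partA, fun hμeq => ?_⟩
  have hμ2 : μ ^ 2 = (m : ℝ) := by
    rw [hμeq, Real.sq_sqrt (by positivity)]
  have hμ4r : 4 * (r : ℝ) ≤ μ := hμeq ▸ h4r
  have hμ3 : μ ^ 3 = (m : ℝ) * μ := by
    rw [pow_succ, hμ2]
  by_contra hne
  have haltm : a < m := lt_of_le_of_ne ham (fun h => hne h)
  have h1m : (a : ℝ) + 1 ≤ (m : ℝ) := by exact_mod_cast haltm
  nlinarith


theorem stmt19 {V : Type*} [Fintype V] (G : SimpleGraph V) (r m : ℕ)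
    (hr : 2 ≤ r)
    (hm : G.edgeSet.ncard = m) (hm' : 16 * r ^ 2 ≤ m)
    (hfree : ¬ Contains (completeBipartiteGraph (Fin 2) (Fin (r + 1))) G)
    (hiso : ∀ v : V, ∃ w, G.Adj v w)
    (lam : ℝ) (hlam : IsSpectralRadius G lam) :
    lam ≤ Real.sqrt m ∧
    (lam = Real.sqrt m ↔ Nonempty (G ≃g _root_.starGraph m)) := by
  classical
  have hm0 : 0 < m := lt_of_lt_of_le (by positivity) hm'
  have hmf : G.edgeFinset.card = m := by
    rw [← hm]; exact (Set.ncard_eq_toFinset_card' _).symm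
  have hcod : ∀ v w : V, v ≠ w →
      ((G.neighborFinset v) ∩ (G.neighborFinset w)).card ≤ r :=
    fun v w hvw => codeg_le hfree hvw
  obtain ⟨x, hx0, hx⟩ := hlam.1
  have hμsub : ∀ u, |lam| * |x u| ≤ ∑ v ∈ G.neighborFinset u, |x v| := by
    intro u
    have h1 : lam * x u = ∑ v ∈ G.neighborFinset u, x v := by
      have h := congrFun hx u
      rw [mulVec_adjMat] at h
      simpa using h.symm
    calc |lam| * |x u| = |lam * x u| := (abs_mul _ _).symm
      _ = |∑ v ∈ G.neighborFinset u, x v| := by rw [h1]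
      _ ≤ ∑ v ∈ G.neighborFinset u, |x v| := Finset.abs_sum_le_sum_abs _ _
  obtain ⟨u0, hu0⟩ : ∃ u, x u ≠ 0 := by
    by_contra h; push_neg at h; exact hx0 (funext h)
  obtain ⟨z, -, hzmax⟩ := Finset.exists_max_image (Finset.univ : Finset V)
    (fun u => |x u|) ⟨u0, Finset.mem_univ u0⟩
  have hz0 : 0 < |x z| := lt_of_lt_of_le (abs_pos.2 hu0) (hzmax u0 (Finset.mem_univ u0))
  set y : V → ℝ := fun u => |x u| / |x z| with hy
  have hy0 : ∀ u, 0 ≤ y u := fun u => by positivity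
  have hyz : y z = 1 := div_self hz0.ne'
  have hy1 : ∀ u, y u ≤ 1 := fun u => (div_le_one hz0).2 (hzmax u (Finset.mem_univ u))
  have hsub : ∀ u, |lam| * y u ≤ ∑ v ∈ G.neighborFinset u, y v := by
    intro u
    have h := hμsub u
    calc |lam| * y u = (|lam| * |x u|) / |x z| := by rw [hy]; ring
      _ ≤ (∑ v ∈ G.neighborFinset u, |x v|) / |x z| := by
          gcongr
      _ = ∑ v ∈ G.neighborFinset u, y v := by rw [Finset.sum_div]
  obtain ⟨hA, hB⟩ := core G hr hmf hm' hcod (|lam|) (abs_nonneg lam) y hy0 z hyz hy1 hsub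
  have part1 : lam ≤ Real.sqrt m := (le_abs_self lam).trans hA
  refine ⟨part1, ?_, ?_⟩
  · -- forward : equality implies star
    intro heq
    have habs : |lam| = Real.sqrt m := by
      rw [heq, abs_of_nonneg (Real.sqrt_nonneg _)]
    have hdeg : G.degree z = m := hB habs
    have hedge : G.incidenceFinset z = G.edgeFinset := by
      refine Finset.eq_of_subset_of_card_le ?_ ?_
      · intro e he
        exact SimpleGraph.mem_edgeFinset.2 ((G.mem_incidenceFinset z e).1 he).1
      · rw [SimpleGraph.card_incidenceFinset_eq_degree, hdeg, hmf]
    have hzin : ∀ {u v : V}, G.Adj u v → u = z ∨ v = z := by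
      intro u v h
      have he : s(u, v) ∈ G.incidenceFinset z := by
        rw [hedge]; exact SimpleGraph.mem_edgeFinset.2 h
      have hz := ((G.mem_incidenceFinset z _).1 he).2
      rcases Sym2.mem_iff.1 hz with h' | h'
      · exact Or.inl h'.symm
      · exact Or.inr h'.symm
    have hstar : ∀ v : V, v ≠ z → G.Adj z v := by
      intro v hv
      obtain ⟨w, hw⟩ := hiso v
      rcases hzin hw with h | h
      · exact absurd h hv
      · exact (h ▸ hw).symm
    have hAdjIff : ∀ u v : V, G.Adj u v ↔ u ≠ v ∧ (u = z ∨ v = z) := by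
      intro u v
      constructor
      · intro h; exact ⟨h.ne, hzin h⟩
      · rintro ⟨hne, h | h⟩
        · subst h; exact hstar v (fun hc => hne hc.symm)
        · subst h; exact (hstar u hne).symm
    have hcardV : Fintype.card V = m + 1 := by
      have huniv : (Finset.univ : Finset V) = insert z (G.neighborFinset z) := by
        refine (Finset.eq_univ_iff_forall.2 ?_).symm
        intro v
        by_cases hv : v = z
        · simp [hv]
        · exact Finset.mem_insert_of_mem ((G.mem_neighborFinset z v).2 (hstar v hv))
      rw [← Finset.card_univ, huniv,
        Finset.card_insert_of_notMem (G.notMem_neighborFinset_self z),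
        SimpleGraph.card_neighborFinset_eq_degree, hdeg]
    let f : V ≃ Fin (m + 1) :=
      (Fintype.equivFinOfCardEq hcardV).trans
        (Equiv.swap ((Fintype.equivFinOfCardEq hcardV) z) 0)
    have hfz : f z = 0 := by
      simp only [f, Equiv.trans_apply, Equiv.swap_apply_left]
    have hf0 : ∀ u : V, f u = 0 ↔ u = z := by
      intro u
      rw [← hfz]
      exact f.apply_eq_iff_eq
    refine ⟨⟨f, ?_⟩⟩
    intro u v
    simp only [_root_.starGraph, SimpleGraph.fromRel_adj]
    rw [hAdjIff u v]
    constructor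
    · rintro ⟨hne, h⟩
      refine ⟨fun hc => hne (congrArg f hc), ?_⟩
      rcases h with h | h
      · exact Or.inl ((hf0 u).1 h)
      · exact Or.inr ((hf0 v).1 h)
    · rintro ⟨hne, h⟩
      refine ⟨fun hc => hne (f.injective hc), ?_⟩
      rcases h with h | h
      · exact Or.inl ((hf0 u).2 h)
      · exact Or.inr ((hf0 v).2 h)
  · -- backward : star implies equality
    rintro ⟨φ⟩
    set z' : V := φ.symm 0 with hz'
    have hphi0 : ∀ u : V, φ u = 0 ↔ u = z' := by
      intro u
      constructor
      · intro h
        have := congrArg φ.symm h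
        simpa [hz'] using this
      · intro h
        subst h
        simp [hz']
    have hAdj : ∀ u v : V, G.Adj u v ↔ u ≠ v ∧ (u = z' ∨ v = z') := by
      intro u v
      rw [← φ.map_rel_iff]
      simp only [_root_.starGraph, SimpleGraph.fromRel_adj]
      constructor
      · rintro ⟨hne, h⟩
        refine ⟨fun hc => hne (congrArg φ hc), ?_⟩
        rcases h with h | h
        · exact Or.inl ((hphi0 u).1 h)
        · exact Or.inr ((hphi0 v).1 h)
      · rintro ⟨hne, h⟩
        refine ⟨fun hc => hne (φ.injective hc), ?_⟩
        rcases h with h | h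
        · exact Or.inl ((hphi0 u).2 h)
        · exact Or.inr ((hphi0 v).2 h)
    have hcardV : Fintype.card V = m + 1 := by
      rw [← Fintype.card_fin (m + 1)]
      exact Fintype.card_congr φ.toEquiv
    set x' : V → ℝ := fun u => if u = z' then Real.sqrt m else 1 with hx'
    have hsm : (0:ℝ) < Real.sqrt m := Real.sqrt_pos.2 (by exact_mod_cast hm0)
    have hx'0 : x' ≠ 0 := by
      intro h
      have := congrFun h z'
      simp only [hx', if_pos rfl, Pi.zero_apply] at this
      exact hsm.ne' this
    have heig : (adjMat G).mulVec x' = Real.sqrt m • x' := by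
      funext u
      rw [mulVec_adjMat]
      by_cases hu : u = z'
      · subst hu
        have hNz : G.neighborFinset z' = Finset.univ.erase z' := by
          ext v
          rw [G.mem_neighborFinset z' v, hAdj]
          simp only [Finset.mem_erase, Finset.mem_univ, and_true]
          constructor
          · rintro ⟨hne, -⟩
            exact fun hc => hne hc.symm
          · intro h
            exact ⟨fun hc => h hc.symm, by simp⟩
        rw [hNz]
        have hsum : ∑ v ∈ Finset.univ.erase z', x' v = (m : ℝ) := by
          have h1 : ∑ v ∈ Finset.univ.erase z', x' v = ∑ v ∈ Finset.univ.erase z', 1 :=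
            Finset.sum_congr rfl fun v hv => if_neg (Finset.mem_erase.1 hv).1
          rw [h1, Finset.sum_const, nsmul_eq_mul, mul_one,
            Finset.card_erase_of_mem (Finset.mem_univ _), Finset.card_univ, hcardV]
          simp
        rw [hsum]
        have hxz : x' z' = Real.sqrt m := by simp [hx']
        rw [Pi.smul_apply, hxz, smul_eq_mul, Real.mul_self_sqrt (Nat.cast_nonneg m)]
      · have hNu : G.neighborFinset u = {z'} := by
          ext v
          rw [G.mem_neighborFinset u v, hAdj]
          simp only [Finset.mem_singleton]
          constructor
          · rintro ⟨hne, h | h⟩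
            · exact absurd h hu
            · exact h
          · intro h
            subst h
            exact ⟨hu, Or.inr rfl⟩
        rw [hNu, Finset.sum_singleton]
        have hxz : x' z' = Real.sqrt m := by simp [hx']
        have hxu : x' u = 1 := by simp [hx', hu]
        rw [Pi.smul_apply, hxz, hxu, smul_eq_mul, mul_one]
    exact le_antisymm part1 (hlam.2 (Real.sqrt m) x' hx'0 heig)
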